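/- ℍ_p = {π(U) : U ∈ M₂(ℂ) unitary} satisfies the following three descriptions: ℍ_p = {(a, x₁, x₂, x₃) ∈ ℂ⁴ : (x₁, x₂, x₃) ∈ b𝔼 and |a|² + |x₁|² = 1} = {(a, x₁, x₂, x₃) ∈ closure(ℍ_N) : |x₃| = 1} = {(−η·z, w, η·conj(w), η) : z, w ∈ ℂ with |z|² + |w|² = 1, η ∈ 𝕋}. -/

import Mathlib

noncomputable section

open Complex

/-- The expression `1 - x₁ z₁ - x₂ z₂ + x₃ z₁ z₂`. -/
def hexDen (x : ℂ × ℂ × ℂ) (z₁ z₂ : ℂ) : ℂ :=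
  1 - x.1 * z₁ - x.2.1 * z₂ + x.2.2 * z₁ * z₂

/-- The tetrablock `𝔼 ⊆ ℂ³`. -/
def tetrablock : Set (ℂ × ℂ × ℂ) :=
  {x | ∀ z₁ z₂ : ℂ, ‖z₁‖ ≤ 1 → ‖z₂‖ ≤ 1 → hexDen x z₁ z₂ ≠ 0}

/-- The distinguished boundary `b𝔼` of the tetrablock. -/
def bE : Set (ℂ × ℂ × ℂ) :=
  {x | x.1 = (starRingEnd ℂ) x.2.1 * x.2.2 ∧ ‖x.2.2‖ = 1 ∧ ‖x.2.1‖ ≤ 1}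

/-- The linear fractional map `ψ_{z₁,z₂}(a, x₁, x₂, x₃)`. -/
def psi (z₁ z₂ : ℂ) (q : ℂ × ℂ × ℂ × ℂ) : ℂ :=
  q.1 * ((Real.sqrt ((1 - ‖z₁‖ ^ 2) * (1 - ‖z₂‖ ^ 2)) : ℝ) : ℂ) / hexDen q.2 z₁ z₂

/-- `sup_{z₁,z₂ ∈ 𝔻} |ψ_{z₁,z₂}(q)|`. -/
def supPsi (q : ℂ × ℂ × ℂ × ℂ) : ℝ :=
  sSup {r : ℝ | ∃ z₁ z₂ : ℂ, ‖z₁‖ < 1 ∧ ‖z₂‖ < 1 ∧ r = ‖psi z₁ z₂ q‖}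

/-- The function `K_*` on the tetrablock. -/
def Kstar (x : ℂ × ℂ × ℂ) : ℝ :=
  sSup {r : ℝ | ∃ z₁ z₂ : ℂ, ‖z₁‖ < 1 ∧ ‖z₂‖ < 1 ∧
    r = Real.sqrt ((1 - ‖z₁‖ ^ 2) * (1 - ‖z₂‖ ^ 2)) / ‖hexDen x z₁ z₂‖}

/-- The hexablock `ℍ ⊆ ℂ⁴`. -/
def hexablock : Set (ℂ × ℂ × ℂ × ℂ) :=
  {q | q.2 ∈ tetrablock ∧ supPsi q < 1}

/-- Operator norm of a `2 × 2` complex matrix acting on Euclidean `ℂ²`. -/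
def opNorm2 (A : Matrix (Fin 2) (Fin 2) ℂ) : ℝ :=
  ‖Matrix.toEuclideanCLM (𝕜 := ℂ) A‖

/-- `π(A) = (a₂₁, a₁₁, a₂₂, det A)`. -/
def piMap (A : Matrix (Fin 2) (Fin 2) ℂ) : ℂ × ℂ × ℂ × ℂ :=
  (A 1 0, A 0 0, A 1 1, A.det)

/-- The structured singular value `μ_hexa`, valued in `[0, ∞]`;
the infimum over the empty set is `∞`, whose inverse is `0`. -/
def muHexa (A : Matrix (Fin 2) (Fin 2) ℂ) : ENNReal :=
  (sInf {r : ENNReal | ∃ X : Matrix (Fin 2) (Fin 2) ℂ,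
      X 1 0 = 0 ∧ (1 - A * X).det = 0 ∧ r = ENNReal.ofReal (opNorm2 X)})⁻¹

/-- The μ-hexablock `ℍ_μ`. -/
def hexMu : Set (ℂ × ℂ × ℂ × ℂ) :=
  {q | ∃ A : Matrix (Fin 2) (Fin 2) ℂ, muHexa A < 1 ∧ piMap A = q}

/-- The normed hexablock `ℍ_N`. -/
def hexN : Set (ℂ × ℂ × ℂ × ℂ) :=
  {q | ∃ A : Matrix (Fin 2) (Fin 2) ℂ, opNorm2 A < 1 ∧ piMap A = q}

/-- `ℍ_p = π(𝒰(2))`. -/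
def hexP : Set (ℂ × ℂ × ℂ × ℂ) :=
  {q | ∃ U : Matrix (Fin 2) (Fin 2) ℂ, U ∈ Matrix.unitaryGroup (Fin 2) ℂ ∧ piMap U = q}

/-- Evaluation of a polynomial in four variables at a point of `ℂ⁴`. -/
def evalPoly4 (p : MvPolynomial (Fin 4) ℂ) (q : ℂ × ℂ × ℂ × ℂ) : ℂ :=
  MvPolynomial.eval ![q.1, q.2.1, q.2.2.1, q.2.2.2] p

/-- Polynomial convexity of a subset of `ℂ⁴`. -/
def PolyConvex (K : Set (ℂ × ℂ × ℂ × ℂ)) : Prop :=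
  ∀ z ∉ K, ∃ p : MvPolynomial (Fin 4) ℂ,
    (∀ w ∈ K, ‖evalPoly4 p w‖ ≤ 1) ∧ 1 < ‖evalPoly4 p z‖

/-- Polynomial convex hull of a subset of `ℂ⁴`. -/
def polyHull (K : Set (ℂ × ℂ × ℂ × ℂ)) : Set (ℂ × ℂ × ℂ × ℂ) :=
  {z | ∀ p : MvPolynomial (Fin 4) ℂ,
    ‖evalPoly4 p z‖ ≤ sSup {r : ℝ | ∃ w ∈ K, r = ‖evalPoly4 p w‖}}

/-- The pentablock `𝒫 ⊆ ℂ³`. -/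
def pentablock : Set (ℂ × ℂ × ℂ) :=
  {q | ∃ A : Matrix (Fin 2) (Fin 2) ℂ, opNorm2 A < 1 ∧ (A 1 0, A 0 0 + A 1 1, A.det) = q}

/-!
A unitary `U ∈ 𝒰(2)` satisfies `adj U = det U • U*`, so it has the form `[[a, -η c̄], [c, η ā]]`
with `|a|² + |c|² = 1` and `η = det U ∈ 𝕋`; conversely every such matrix is unitary. Hence
`ℍ_p = {(c, a, η ā, η)}`, and the first and third descriptions are reparametrisations of this one.
For the second, `closure ℍ_N = π(‖A‖ ≤ 1)` because the closed unit ball is compact, and a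
contraction `A` with `|det A| = 1` is unitary: by Lagrange's identity
`|det A|² + |⟨A e₀, A e₁⟩|² = ‖A e₀‖² ‖A e₁‖² ≤ 1`, so the columns of `A` are orthonormal.
-/

open Matrix
open scoped ComplexConjugate Matrix.Norms.L2Operator

lemma Matrix.sum_sq_norm_le_sq_l2_opNorm {𝕜 m n : Type*} [RCLike 𝕜] [Fintype m] [Fintype n]
    [DecidableEq n] (A : Matrix m n 𝕜) (j : n) : ∑ i, ‖A i j‖ ^ 2 ≤ ‖A‖ ^ 2 := by
  have h := l2_opNorm_mulVec A (EuclideanSpace.single j 1)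
  have hcol : (EuclideanSpace.equiv m 𝕜).symm (A *ᵥ EuclideanSpace.single j (1 : 𝕜)) =
      WithLp.toLp 2 (fun i => A i j) := by
    ext i; simp
  rw [PiLp.norm_single, norm_one, mul_one, hcol] at h
  have hnorm := EuclideanSpace.norm_sq_eq (WithLp.toLp 2 fun i => A i j)
  dsimp only at hnorm
  rw [← hnorm]
  exact pow_le_pow_left₀ (norm_nonneg _) h 2

lemma Matrix.adjugate_eq_det_smul_star {R n : Type*} [CommRing R] [StarRing R] [Fintype n]
    [DecidableEq n] {U : Matrix n n R} (hU : U ∈ unitaryGroup n R) :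
    adjugate U = U.det • star U :=
  calc adjugate U = (star U * U) * adjugate U := by rw [Unitary.star_mul_self_of_mem hU, one_mul]
    _ = U.det • star U := by rw [mul_assoc, mul_adjugate, mul_smul_comm, mul_one]

lemma Complex.conj_mul_self_of_norm_eq_one {η : ℂ} (hη : ‖η‖ = 1) : conj η * η = 1 := by
  simp [Complex.conj_mul', hη]

lemma Complex.conj_mul_add_conj_mul_eq_one {a c : ℂ} (hac : ‖a‖ ^ 2 + ‖c‖ ^ 2 = 1) :
    conj a * a + conj c * c = 1 := by
  simp only [Complex.conj_mul']
  exact_mod_cast hac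

lemma Matrix.sq_norm_det_fin_two_add (A : Matrix (Fin 2) (Fin 2) ℂ) :
    ‖A.det‖ ^ 2 + ‖(Aᴴ * A) 0 1‖ ^ 2 =
      (‖A 0 0‖ ^ 2 + ‖A 1 0‖ ^ 2) * (‖A 0 1‖ ^ 2 + ‖A 1 1‖ ^ 2) := by
  simp only [det_fin_two, mul_apply, Fin.sum_univ_two, conjTranspose_apply, RCLike.star_def,
    Complex.sq_norm, Complex.normSq_apply]
  simp
  ring

lemma Matrix.mem_unitaryGroup_of_l2_opNorm_le_one_of_norm_det {A : Matrix (Fin 2) (Fin 2) ℂ}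
    (hA : ‖A‖ ≤ 1) (hdet : ‖A.det‖ = 1) : A ∈ unitaryGroup (Fin 2) ℂ := by
  have hcol (j : Fin 2) : ‖A 0 j‖ ^ 2 + ‖A 1 j‖ ^ 2 ≤ 1 := by
    have := A.sum_sq_norm_le_sq_l2_opNorm j
    rw [Fin.sum_univ_two] at this
    nlinarith [norm_nonneg A]
  have hgram := A.sq_norm_det_fin_two_add
  rw [hdet] at hgram
  have h0 := hcol 0
  have h1 := hcol 1
  have hβ : (Aᴴ * A) 0 1 = 0 := by
    rw [← norm_eq_zero]
    nlinarith [norm_nonneg ((Aᴴ * A) 0 1), norm_nonneg (A 0 0), norm_nonneg (A 1 0),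
      norm_nonneg (A 0 1), norm_nonneg (A 1 1)]
  rw [hβ, norm_zero] at hgram
  have hP : ‖A 0 0‖ ^ 2 + ‖A 1 0‖ ^ 2 = 1 := by nlinarith
  have hQ : ‖A 0 1‖ ^ 2 + ‖A 1 1‖ ^ 2 = 1 := by nlinarith
  have hdiag (j : Fin 2) : (Aᴴ * A) j j = ((‖A 0 j‖ ^ 2 + ‖A 1 j‖ ^ 2 : ℝ) : ℂ) := by
    simp [mul_apply, Fin.sum_univ_two, Complex.conj_mul']
  rw [mem_unitaryGroup_iff', star_eq_conjTranspose]
  ext i j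
  fin_cases i <;> fin_cases j
  · simp [hdiag, hP]
  · simpa using hβ
  · simpa [← (isHermitian_conjTranspose_mul_self A).apply 0 1] using hβ
  · simp [hdiag, hQ]

lemma Matrix.eq_det_mul_conj_of_mem_unitaryGroup {U : Matrix (Fin 2) (Fin 2) ℂ}
    (hU : U ∈ unitaryGroup (Fin 2) ℂ) : U 1 1 = U.det * conj (U 0 0) := by
  simpa [adjugate_fin_two] using congr_fun₂ (adjugate_eq_det_smul_star hU) 0 0

lemma Matrix.sq_norm_add_sq_norm_of_mem_unitaryGroup {U : Matrix (Fin 2) (Fin 2) ℂ}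
    (hU : U ∈ unitaryGroup (Fin 2) ℂ) : ‖U 0 0‖ ^ 2 + ‖U 1 0‖ ^ 2 = 1 := by
  have h := congr_fun₂ (mem_unitaryGroup_iff'.mp hU) 0 0
  simp [mul_apply, Fin.sum_univ_two, Complex.conj_mul'] at h
  exact_mod_cast h

lemma Matrix.mem_unitaryGroup_of_column {a c η : ℂ} (hac : ‖a‖ ^ 2 + ‖c‖ ^ 2 = 1)
    (hη : ‖η‖ = 1) : !![a, -(η * conj c); c, η * conj a] ∈ unitaryGroup (Fin 2) ℂ := by
  rw [mem_unitaryGroup_iff']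
  ext i j
  fin_cases i <;> fin_cases j <;> simp [mul_apply, Fin.sum_univ_two]
  · exact Complex.conj_mul_add_conj_mul_eq_one hac
  · ring
  · ring
  · linear_combination (conj c * c + conj a * a) * Complex.conj_mul_self_of_norm_eq_one hη +
      Complex.conj_mul_add_conj_mul_eq_one hac

lemma Matrix.det_column {a c η : ℂ} (hac : ‖a‖ ^ 2 + ‖c‖ ^ 2 = 1) :
    (!![a, -(η * conj c); c, η * conj a]).det = η := by
  rw [det_fin_two_of]
  linear_combination η * Complex.conj_mul_add_conj_mul_eq_one hac

lemma hexP_eq_setOf_column : hexP = {q | ∃ a c η : ℂ, ‖a‖ ^ 2 + ‖c‖ ^ 2 = 1 ∧ ‖η‖ = 1 ∧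
    q = (c, a, η * conj a, η)} := by
  ext q
  constructor
  · rintro ⟨U, hU, rfl⟩
    exact ⟨U 0 0, U 1 0, U.det, sq_norm_add_sq_norm_of_mem_unitaryGroup hU,
      CStarRing.norm_of_mem_unitary (det_of_mem_unitary hU), by
        simp [piMap, eq_det_mul_conj_of_mem_unitaryGroup hU]⟩
  · rintro ⟨a, c, η, hac, hη, rfl⟩
    exact ⟨_, mem_unitaryGroup_of_column hac hη, by simp [piMap, det_column hac]⟩

lemma hexP_eq_setOf_bE :
    hexP = {q : ℂ × ℂ × ℂ × ℂ | q.2 ∈ bE ∧ ‖q.1‖ ^ 2 + ‖q.2.1‖ ^ 2 = 1} := by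
  rw [hexP_eq_setOf_column]
  ext ⟨c, a, x, η⟩
  constructor
  · rintro ⟨a, c, η, hac, hη, h⟩
    simp only [Prod.mk.injEq] at h
    obtain ⟨rfl, rfl, rfl, rfl⟩ := h
    refine ⟨⟨?_, hη, ?_⟩, by linarith⟩
    · simp only [map_mul, Complex.conj_conj]
      linear_combination -a * Complex.conj_mul_self_of_norm_eq_one hη
    · simp [hη]
      nlinarith [norm_nonneg c]
  · rintro ⟨⟨ha, hη, -⟩, hac⟩
    dsimp only at ha hη hac
    subst ha
    refine ⟨_, c, η, by linarith, hη, ?_⟩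
    simp only [Prod.mk.injEq, map_mul, Complex.conj_conj, true_and, and_true]
    linear_combination -x * Complex.conj_mul_self_of_norm_eq_one hη

lemma hexP_eq_setOf_param :
    hexP = {q : ℂ × ℂ × ℂ × ℂ | ∃ z w η : ℂ, ‖z‖ ^ 2 + ‖w‖ ^ 2 = 1 ∧ ‖η‖ = 1 ∧
      q = (-(η * z), w, η * conj w, η)} := by
  rw [hexP_eq_setOf_column]
  ext q
  constructor
  · rintro ⟨a, c, η, hac, hη, rfl⟩
    refine ⟨-(conj η * c), a, η, by simp [hη]; linarith, hη, ?_⟩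
    simp only [Prod.mk.injEq, and_true]
    linear_combination -c * Complex.conj_mul_self_of_norm_eq_one hη
  · rintro ⟨z, w, η, hzw, hη, rfl⟩
    exact ⟨w, -(η * z), η, by simp [hη]; linarith, hη, rfl⟩

lemma continuous_piMap : Continuous piMap := by
  unfold piMap
  fun_prop

-- Under the L2-operator norm instance, `opNorm2 A` is `‖A‖` and the topology is the entrywise one.
lemma closure_hexN : closure hexN = piMap '' Metric.closedBall 0 1 := by
  have hN : hexN = piMap '' Metric.ball 0 1 := by
    ext q
    simp [hexN, opNorm2, cstar_norm_def]
  rw [hN]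
  refine (closure_minimal (Set.image_mono Metric.ball_subset_closedBall)
    ((isCompact_closedBall 0 1).image continuous_piMap).isClosed).antisymm ?_
  rw [← closure_ball (0 : Matrix (Fin 2) (Fin 2) ℂ) one_ne_zero]
  exact image_closure_subset_closure_image continuous_piMap

lemma hexP_eq_setOf_closure_hexN :
    hexP = {q : ℂ × ℂ × ℂ × ℂ | q ∈ closure hexN ∧ ‖q.2.2.2‖ = 1} := by
  rw [closure_hexN]
  ext q
  constructor
  · rintro ⟨U, hU, rfl⟩
    exact ⟨⟨U, mem_closedBall_zero_iff.mpr (CStarRing.norm_of_mem_unitary hU).le, rfl⟩,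
      CStarRing.norm_of_mem_unitary (det_of_mem_unitary hU)⟩
  · rintro ⟨⟨A, hA, rfl⟩, hdet⟩
    exact ⟨A, mem_unitaryGroup_of_l2_opNorm_le_one_of_norm_det
      (mem_closedBall_zero_iff.mp hA) hdet, rfl⟩

/-- Three descriptions of `ℍ_p = π(𝒰(2))`. -/
theorem stmt15 :
    hexP = {q : ℂ × ℂ × ℂ × ℂ | q.2 ∈ bE ∧ ‖q.1‖ ^ 2 + ‖q.2.1‖ ^ 2 = 1} ∧
    hexP = {q : ℂ × ℂ × ℂ × ℂ | q ∈ closure hexN ∧ ‖q.2.2.2‖ = 1} ∧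
    hexP = {q : ℂ × ℂ × ℂ × ℂ | ∃ z w η : ℂ, ‖z‖ ^ 2 + ‖w‖ ^ 2 = 1 ∧ ‖η‖ = 1 ∧
      q = (-(η * z), w, η * (starRingEnd ℂ) w, η)} := by
  exact ⟨hexP_eq_setOf_bE, hexP_eq_setOf_closure_hexN, hexP_eq_setOf_param⟩
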